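/- The greedy nested feature selection procedure does not in general return the optimal joint selection: for the Table 2 instance, every 2-element output subset containing output 1 has average efficiency strictly less than 1 (both (1/4) Σ_{k=1}^4 E^(k)({1,2}) < 1 and (1/4) Σ_{k=1}^4 E^(k)({1,3}) < 1), whereas v(2) = 1 is attained by the subset {2, 3}; since the greedy procedure selects output 1 first, its value for p = 2 is strictly less than v(2). -/

import Mathlib

open Finset

/-- Feasible set `F^(k)(S)` of the CRS input-oriented DEA model of DMU `k`
with allowed output set `S`. -/
def DEAfeasible {K I O : ℕ} (x : Fin K → Fin I → ℝ) (y : Fin K → Fin O → ℝ)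
    (k : Fin K) (S : Finset (Fin O)) (α : Fin I → ℝ) (β : Fin O → ℝ) : Prop :=
  (∀ i, 0 ≤ α i) ∧ (∀ o, 0 ≤ β o) ∧ (∀ o, o ∉ S → β o = 0) ∧
  (∀ j, ∑ o, β o * y j o ≤ ∑ i, α i * x j i) ∧ (∑ i, α i * x k i = 1)

/-- CRS input-oriented DEA efficiency `E^(k)(S)` of DMU `k` with allowed outputs `S`. -/
noncomputable def DEAeff {K I O : ℕ} (x : Fin K → Fin I → ℝ) (y : Fin K → Fin O → ℝ)
    (k : Fin K) (S : Finset (Fin O)) : ℝ :=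
  sSup {t | ∃ α β, DEAfeasible x y k S α β ∧ t = ∑ o, β o * y k o}

/-- Individual selection value `v^(k)(p)`. -/
noncomputable def vInd {K I O : ℕ} (x : Fin K → Fin I → ℝ) (y : Fin K → Fin O → ℝ)
    (k : Fin K) (p : ℕ) : ℝ :=
  sSup {t | ∃ S : Finset (Fin O), S.card = p ∧ t = DEAeff x y k S}

/-- Joint selection value `v(p)`. -/
noncomputable def vJoint {K I O : ℕ} (x : Fin K → Fin I → ℝ) (y : Fin K → Fin O → ℝ)
    (p : ℕ) : ℝ :=
  sSup {t | ∃ S : Finset (Fin O), S.card = p ∧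
    t = (1 / (K : ℝ)) * ∑ k, DEAeff x y k S}


/-- Table 2 instance: single input equal to 1 for each of the 4 DMUs. -/
def xT2 : Fin 4 → Fin 1 → ℝ := fun _ _ => 1

/-- Table 2 instance: the 3 outputs of the 4 DMUs. -/
noncomputable def yT2 : Fin 4 → Fin 3 → ℝ :=
  ![![0.85, 0.2, 0.8],
    ![0.95, 0.4, 0.6],
    ![0.9, 0.6, 0.4],
    ![1, 0.8, 0.2]]

/-!
Every efficiency is at most `1`: the constraint of DMU `k` itself bounds its weighted output by
its normalized input. At every DMU of Table 2 outputs 2 and 3 sum to `1`, so with the weights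
`(0, 1, 1)` all four DMUs are efficient and `v(2) = 1`. Paired with output 2 or 3, output 1
leaves some DMU strictly inefficient, which an envelopment (dual) certificate exhibits, so the
average efficiency of any pair containing output 1 drops below `1`.
-/

section DEA

variable {K I O : ℕ} {x : Fin K → Fin I → ℝ} {y : Fin K → Fin O → ℝ} {k : Fin K}
  {S : Finset (Fin O)} {α : Fin I → ℝ} {β : Fin O → ℝ}

namespace DEAfeasible

theorem value_le_one (h : DEAfeasible x y k S α β) : ∑ o, β o * y k o ≤ 1 :=
  (h.2.2.2.1 k).trans h.2.2.2.2.le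

/-- Weak LP duality against the envelopment form of the DEA model. -/
theorem value_le_of_envelopment (h : DEAfeasible x y k S α β) {v : ℝ} (w : Fin K → ℝ)
    (hw : ∀ j, 0 ≤ w j) (hx : ∀ i, ∑ j, w j * x j i ≤ v * x k i)
    (hy : ∀ o ∈ S, y k o ≤ ∑ j, w j * y j o) :
    ∑ o, β o * y k o ≤ v := by
  obtain ⟨hα, hβ, hβS, hcon, hnorm⟩ := h
  calc ∑ o, β o * y k o
      ≤ ∑ o, β o * ∑ j, w j * y j o := by
        refine sum_le_sum fun o _ => ?_
        by_cases ho : o ∈ S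
        · exact mul_le_mul_of_nonneg_left (hy o ho) (hβ o)
        · simp [hβS o ho]
    _ = ∑ j, w j * ∑ o, β o * y j o := by
        simp only [mul_sum]; rw [sum_comm]; congr! 2; ring
    _ ≤ ∑ j, w j * ∑ i, α i * x j i :=
        sum_le_sum fun j _ => mul_le_mul_of_nonneg_left (hcon j) (hw j)
    _ = ∑ i, α i * ∑ j, w j * x j i := by
        simp only [mul_sum]; rw [sum_comm]; congr! 2; ring
    _ ≤ ∑ i, α i * (v * x k i) :=
        sum_le_sum fun i _ => mul_le_mul_of_nonneg_left (hx i) (hα i)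
    _ = v := by simp only [mul_left_comm _ v, ← mul_sum, hnorm, mul_one]

end DEAfeasible

theorem DEAeff_le_one : DEAeff x y k S ≤ 1 :=
  Real.sSup_le (by rintro _ ⟨α, β, h, rfl⟩; exact h.value_le_one) zero_le_one

theorem DEAeff_le_of_envelopment {v : ℝ} (hv : 0 ≤ v) (w : Fin K → ℝ)
    (hw : ∀ j, 0 ≤ w j) (hx : ∀ i, ∑ j, w j * x j i ≤ v * x k i)
    (hy : ∀ o ∈ S, y k o ≤ ∑ j, w j * y j o) :
    DEAeff x y k S ≤ v :=
  Real.sSup_le (by rintro _ ⟨α, β, h, rfl⟩; exact h.value_le_of_envelopment w hw hx hy) hv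

theorem DEAeff_eq_one_of_feasible (h : DEAfeasible x y k S α β)
    (hval : ∑ o, β o * y k o = 1) : DEAeff x y k S = 1 :=
  IsGreatest.csSup_eq ⟨⟨α, β, h, hval.symm⟩, by rintro _ ⟨α, β, h, rfl⟩; exact h.value_le_one⟩

theorem sum_DEAeff_le_card : ∑ k, DEAeff x y k S ≤ K :=
  (sum_le_sum fun _ _ => DEAeff_le_one).trans (by simp)

theorem average_DEAeff_le_one : (1 / (K : ℝ)) * ∑ k, DEAeff x y k S ≤ 1 := by
  rcases K.eq_zero_or_pos with rfl | hK
  · simp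
  rw [one_div_mul_eq_div, div_le_one (by positivity)]
  exact sum_DEAeff_le_card

theorem average_DEAeff_lt_one (k : Fin K) (hk : DEAeff x y k S < 1) :
    (1 / (K : ℝ)) * ∑ k, DEAeff x y k S < 1 := by
  have hsum : ∑ k, DEAeff x y k S < ∑ _k : Fin K, (1 : ℝ) :=
    sum_lt_sum (fun _ _ => DEAeff_le_one) ⟨k, mem_univ k, hk⟩
  rw [one_div_mul_eq_div, div_lt_one (by exact_mod_cast k.pos)]
  simpa using hsum

theorem average_DEAeff_eq_one (hK : K ≠ 0) (h : ∀ k, DEAeff x y k S = 1) :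
    (1 / (K : ℝ)) * ∑ k, DEAeff x y k S = 1 := by
  simp [h, hK]

theorem vJoint_eq_one {p : ℕ} (hK : K ≠ 0) (hS : S.card = p) (h : ∀ k, DEAeff x y k S = 1) :
    vJoint x y p = 1 :=
  IsGreatest.csSup_eq ⟨⟨S, hS, (average_DEAeff_eq_one hK h).symm⟩,
    by rintro _ ⟨T, -, rfl⟩; exact average_DEAeff_le_one⟩

end DEA

theorem yT2_one_add_yT2_two (k : Fin 4) : yT2 k 1 + yT2 k 2 = 1 := by
  fin_cases k <;> norm_num [yT2, Matrix.cons_val_two]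

theorem DEAfeasible_table2_12 (k : Fin 4) :
    DEAfeasible xT2 yT2 k {1, 2} 1 ![0, 1, 1] := by
  refine ⟨fun _ => zero_le_one, ?_, ?_, fun j => ?_, by simp [xT2]⟩
  · intro o; fin_cases o <;> norm_num
  · intro o ho; fin_cases o <;> simp_all
  · simp [xT2, Fin.sum_univ_three, yT2_one_add_yT2_two]

theorem DEAeff_table2_12 (k : Fin 4) : DEAeff xT2 yT2 k {1, 2} = 1 :=
  DEAeff_eq_one_of_feasible (DEAfeasible_table2_12 k)
    (by simp [Fin.sum_univ_three, yT2_one_add_yT2_two])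

/-- DMU 4, scaled by `0.85`, dominates DMU 1 on outputs 1 and 2 (DMUs and outputs numbered
from 1, as in the paper). -/
theorem DEAeff_table2_01_zero_le : DEAeff xT2 yT2 0 {0, 1} ≤ 0.85 := by
  refine DEAeff_le_of_envelopment (by norm_num) ![0, 0, 0, 0.85] ?_ ?_ ?_
  · intro j; fin_cases j <;> norm_num [Matrix.cons_val_two, Matrix.cons_val_three]
  · intro i; norm_num [xT2, Fin.sum_univ_four, Matrix.cons_val_two, Matrix.cons_val_three]
  · simp only [mem_insert, mem_singleton]
    rintro o (rfl | rfl) <;>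
      norm_num [yT2, Fin.sum_univ_four, Matrix.cons_val_two, Matrix.cons_val_three]

/-- The mix `22/41 · DMU 2 + 16/41 · DMU 4` matches DMU 3 on outputs 1 and 3. -/
theorem DEAeff_table2_02_two_le : DEAeff xT2 yT2 2 {0, 2} ≤ 38 / 41 := by
  refine DEAeff_le_of_envelopment (by norm_num) ![0, 22 / 41, 0, 16 / 41] ?_ ?_ ?_
  · intro j; fin_cases j <;> norm_num [Matrix.cons_val_two, Matrix.cons_val_three]
  · intro i; norm_num [xT2, Fin.sum_univ_four, Matrix.cons_val_two, Matrix.cons_val_three]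
  · simp only [mem_insert, mem_singleton]
    rintro o (rfl | rfl) <;>
      norm_num [yT2, Fin.sum_univ_four, Matrix.cons_val_two, Matrix.cons_val_three]

/-- The greedy nested procedure is not optimal in general: for the Table 2
instance, every 2-element output subset containing output 1 (zero-indexed `0`) has
average efficiency strictly below `1`, whereas `v(2) = 1` is attained by the subset
`{2,3}` (zero-indexed `{1,2}`); since the greedy procedure selects output 1 first, its
value for `p = 2` is strictly less than `v(2)`. -/
theorem table2_greedy_not_optimal :
    (1 / 4 : ℝ) * (∑ k, DEAeff xT2 yT2 k {0, 1}) < 1 ∧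
    (1 / 4 : ℝ) * (∑ k, DEAeff xT2 yT2 k {0, 2}) < 1 ∧
    vJoint xT2 yT2 2 = 1 ∧
    (1 / 4 : ℝ) * (∑ k, DEAeff xT2 yT2 k {1, 2}) = 1 ∧
    (∀ S : Finset (Fin 3), S.card = 2 → (0 : Fin 3) ∈ S →
      (1 / 4 : ℝ) * (∑ k, DEAeff xT2 yT2 k S) < vJoint xT2 yT2 2) := by
  have h01 : (1 / 4 : ℝ) * (∑ k, DEAeff xT2 yT2 k {0, 1}) < 1 := by
    simpa using average_DEAeff_lt_one 0
      (DEAeff_table2_01_zero_le.trans_lt (by norm_num))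
  have h02 : (1 / 4 : ℝ) * (∑ k, DEAeff xT2 yT2 k {0, 2}) < 1 := by
    simpa using average_DEAeff_lt_one 2
      (DEAeff_table2_02_two_le.trans_lt (by norm_num))
  have hv : vJoint xT2 yT2 2 = 1 :=
    vJoint_eq_one four_ne_zero (by decide) DEAeff_table2_12
  refine ⟨h01, h02, hv, by simpa using average_DEAeff_eq_one four_ne_zero DEAeff_table2_12,
    fun S hS h0S => ?_⟩
  obtain rfl | rfl : S = {0, 1} ∨ S = {0, 2} := by revert S; decide
  exacts [hv ▸ h01, hv ▸ h02]
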